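/- arXiv:2207.08459 — 3 statements merged into one kernel-verified Lean document; each statement's English description precedes it below -/
import Mathlib

section
/- Let ((L,≤_L),(P_n)_{n∈ℕ}) be a well-structured grain line and let ((M,≤_M),(Q_n)_{n∈ℕ}) be a grain line in the graph ⋃P defined by ((L,≤_L),(P_n)). Then M ⊆ L, M is an interval of (L,≤_L), and ≤_M coincides with the restriction of ≤_L to M or with the reverse of that restriction. -/
open SimpleGraph

/-- Two walks (with arbitrary endpoints) are edge-disjoint. -/
def EdgeDisjW {V : Type*} {G : SimpleGraph V} {a b c d : V}
    (p : G.Walk a b) (q : G.Walk c d) : Prop :=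
  ∀ e, e ∈ p.edges → e ∉ q.edges

/-- A graph is infinitely edge-connected: it has at least two vertices and
between any two distinct vertices there are infinitely many pairwise
edge-disjoint paths. -/
def InfEdgeConn {V : Type*} (G : SimpleGraph V) : Prop :=
  (∃ u v : V, u ≠ v) ∧
    ∀ u v : V, u ≠ v →
      ∃ P : ℕ → G.Walk u v,
        (∀ n, (P n).IsPath) ∧ ∀ m n, m ≠ n → EdgeDisjW (P m) (P n)

/-- Infinite edge-connectivity of the subgraph spanned by a vertex set `S`
(used for graphs of the form "union of a family of paths", whose abstract
vertex set is `S`). -/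
def InfEdgeConnOn {V : Type*} (G : SimpleGraph V) (S : Set V) : Prop :=
  (∃ u ∈ S, ∃ v ∈ S, u ≠ v) ∧
    ∀ u ∈ S, ∀ v ∈ S, u ≠ v →
      ∃ P : ℕ → G.Walk u v,
        (∀ n, (P n).IsPath) ∧ ∀ m n, m ≠ n → EdgeDisjW (P m) (P n)

/-- `α` together with the family of paths `P` (one for each edge of `H`)
is a strong immersion of `H` in `G`. -/
def IsStrongImmersion {VH VG : Type*} (H : SimpleGraph VH) (G : SimpleGraph VG)
    (α : VH → VG) (P : ∀ ⦃u v : VH⦄, H.Adj u v → G.Walk (α u) (α v)) : Prop :=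
  Function.Injective α ∧
  (∀ ⦃u v : VH⦄ (h : H.Adj u v), (P h).IsPath) ∧
  (∀ ⦃u v u' v' : VH⦄ (h : H.Adj u v) (h' : H.Adj u' v'),
      s(u, v) ≠ s(u', v') → EdgeDisjW (P h) (P h')) ∧
  (∀ ⦃u v : VH⦄ (h : H.Adj u v), ∀ w ∈ (P h).support,
      (∃ z, α z = w) → w = α u ∨ w = α v)

/-- `H` is strongly immersed in `G`. -/
def StronglyImmersed {VH VG : Type*} (H : SimpleGraph VH) (G : SimpleGraph VG) : Prop :=
  ∃ α P, IsStrongImmersion H G α P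

/-- `β` together with the family of paths `P` witnesses that `G` contains
a subdivision of `H`: the paths are internally disjoint and have no internal
vertex among the branch vertices. -/
def IsSubdivision {VH VG : Type*} (H : SimpleGraph VH) (G : SimpleGraph VG)
    (β : VH → VG) (P : ∀ ⦃u v : VH⦄, H.Adj u v → G.Walk (β u) (β v)) : Prop :=
  Function.Injective β ∧
  (∀ ⦃u v : VH⦄ (h : H.Adj u v), (P h).IsPath) ∧
  (∀ ⦃u v u' v' : VH⦄ (h : H.Adj u v) (h' : H.Adj u' v'),
      s(u, v) ≠ s(u', v') → ∀ w, w ∈ (P h).support → w ∈ (P h').support →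
        (w = β u ∨ w = β v) ∧ (w = β u' ∨ w = β v')) ∧
  (∀ ⦃u v : VH⦄ (h : H.Adj u v), ∀ w ∈ (P h).support,
      (∃ z, β z = w) → w = β u ∨ w = β v)

/-- `H` is a topological minor of `G`. -/
def TopMinor {VH VG : Type*} (H : SimpleGraph VH) (G : SimpleGraph VG) : Prop :=
  ∃ β P, IsSubdivision H G β P

/-- The dyadic rationals of the unit interval: the vertices of the halved
Farey graph. -/
def DyadicSet : Set ℚ := {q | ∃ n k : ℕ, k ≤ 2 ^ n ∧ q = (k : ℚ) / 2 ^ n}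

/-- The halved Farey graph: two dyadic rationals of `[0,1]` are adjacent iff
they are of the form `k/2^n` and `(k+1)/2^n`. -/
def halvedFarey : SimpleGraph DyadicSet where
  Adj a b := a ≠ b ∧ ∃ n k : ℕ, k + 1 ≤ 2 ^ n ∧
    ((a.1 = (k : ℚ) / 2 ^ n ∧ b.1 = ((k : ℚ) + 1) / 2 ^ n) ∨
     (b.1 = (k : ℚ) / 2 ^ n ∧ a.1 = ((k : ℚ) + 1) / 2 ^ n))
  symm := by
    constructor
    rintro a b ⟨hne, n, k, hk, h⟩
    exact ⟨hne.symm, n, k, hk, h.symm⟩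
  loopless := by constructor; rintro a ⟨hne, -⟩; exact hne rfl

/-- Adjacency in the Farey graph on `ℚ ∪ {∞}` (`none` is `∞ = ±1/0`). -/
def fareyAdj : Option ℚ → Option ℚ → Prop
  | some q, some r =>
      q.num * (r.den : ℤ) - r.num * (q.den : ℤ) = 1 ∨
      q.num * (r.den : ℤ) - r.num * (q.den : ℤ) = -1
  | some q, none => q.den = 1
  | none, some r => r.den = 1
  | none, none => False

/-- The Farey graph. -/
def fareyGraph : SimpleGraph (Option ℚ) where
  Adj := fareyAdj
  symm := by
    constructor
    rintro (_ | q) (_ | r) h <;> simp only [fareyAdj] at * <;> omega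
  loopless := by
    constructor
    rintro (_ | q) h <;> simp only [fareyAdj] at h <;> omega
/-- `u` occurs strictly before `v` on the list `l`. -/
def Before {V : Type*} (l : List V) (u v : V) : Prop := List.Sublist [u, v] l

/-- `l` is the (consecutive) portion of the list `R` starting at `u` and
ending at `v`. -/
def IsPortion {V : Type*} (R : List V) (u v : V) (l : List V) : Prop :=
  (∃ pre post, R = pre ++ l ++ post) ∧ l.head? = some u ∧ l.getLast? = some v

/-- The union of a family of walks, as a graph on the ambient vertex set
(its abstract vertex set is `walkSupp P`). -/
def walkUnion {V : Type*} {G : SimpleGraph V} {x y : V}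
    (P : ℕ → G.Walk x y) : SimpleGraph V where
  Adj u v := ∃ n, s(u, v) ∈ (P n).edges
  symm := by
    constructor
    rintro u v ⟨n, h⟩
    exact ⟨n, by rwa [Sym2.eq_swap]⟩
  loopless := by
    constructor
    rintro v ⟨n, h⟩
    exact G.irrefl ((P n).edges_subset_edgeSet h)

/-- The vertices appearing on some walk of the family. -/
def walkSupp {V : Type*} {G : SimpleGraph V} {x y : V}
    (P : ℕ → G.Walk x y) : Set V := {v | ∃ n, v ∈ (P n).support}

/-- An `x`–`y` grain line in `G`. -/
structure GrainLine {V : Type*} (G : SimpleGraph V) (x y : V) where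
  ne_xy : x ≠ y
  /-- The limit set `L`. -/
  L : Set V
  /-- The linear order `≤_L` on `L`. -/
  le : V → V → Prop
  /-- The pairwise edge-disjoint `x`–`y` paths. -/
  P : ℕ → G.Walk x y
  isPath : ∀ n, (P n).IsPath
  edgeDisj : ∀ m n, m ≠ n → EdgeDisjW (P m) (P n)
  le_refl : ∀ v ∈ L, le v v
  le_trans : ∀ u ∈ L, ∀ v ∈ L, ∀ w ∈ L, le u v → le v w → le u w
  le_antisymm : ∀ u ∈ L, ∀ v ∈ L, le u v → le v u → u = v
  le_total : ∀ u ∈ L, ∀ v ∈ L, le u v ∨ le v u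
  x_mem : x ∈ L
  y_mem : y ∈ L
  x_min : ∀ v ∈ L, le x v
  y_max : ∀ v ∈ L, le v y
  /-- (GL1): `L` is the set of vertices lying on a final segment of the paths. -/
  gl1 : ∀ v : V, v ∈ L ↔ ∃ N : ℕ, ∀ n : ℕ, v ∈ (P n).support ↔ N ≤ n
  /-- (GL2): a vertex of some path not in `L` lies on no other path. -/
  gl2 : ∀ n : ℕ, ∀ v ∈ (P n).support, v ∉ L → ∀ m : ℕ, m ≠ n → v ∉ (P m).support
  /-- (GL3): for `n ≥ 1`, the path `P n` traverses the vertices of `L_{<n}`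
  in the order given by `≤_L`. -/
  gl3 : ∀ n : ℕ, 1 ≤ n → ∀ u v : V, u ∈ L → v ∈ L →
      (∃ m < n, u ∈ (P m).support) → (∃ m < n, v ∈ (P m).support) →
      u ≠ v → (le u v ↔ Before (P n).support u v)

namespace GrainLine

variable {V : Type*} {G : SimpleGraph V} {x y : V}

/-- The graph `⋃𝒫` defined by the grain line. -/
def union (gl : GrainLine G x y) : SimpleGraph V := walkUnion gl.P

/-- The vertex set of `⋃𝒫`. -/
def supp (gl : GrainLine G x y) : Set V := walkSupp gl.P

/-- The set `L_{<n}` of vertices of `L` of depth `< n`. -/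
def Llt (gl : GrainLine G x y) (n : ℕ) : Set V :=
  {v | v ∈ gl.L ∧ ∃ m < n, v ∈ (gl.P m).support}

/-- The `𝒫`-depth of a vertex. -/
noncomputable def vDepth (gl : GrainLine G x y) (v : V) : ℕ :=
  sInf {n | v ∈ (gl.P n).support}

/-- The `𝒫`-depth of an edge. -/
noncomputable def eDepth (gl : GrainLine G x y) (e : Sym2 V) : ℕ :=
  sInf {n | e ∈ (gl.P n).edges}

/-- `u` and `v` are the ends of a `𝒫`-segment of depth `d`: both lie in
`L_{<d}` and `v` is the successor of `u` in `(L_{<d}, ≤_L)`. -/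
def IsSegEnds (gl : GrainLine G x y) (d : ℕ) (u v : V) : Prop :=
  u ∈ gl.Llt d ∧ v ∈ gl.Llt d ∧ u ≠ v ∧ gl.le u v ∧
    ∀ z ∈ gl.Llt d, gl.le u z → gl.le z v → z = u ∨ z = v

/-- The grain line is well-structured: every vertex of a `𝒫`-segment
`u P_d v` lying in `L` belongs to the interval `[u,v]` of `(L, ≤_L)`. -/
def WellStructured (gl : GrainLine G x y) : Prop :=
  ∀ d u v, gl.IsSegEnds d u v →
    ∀ w ∈ gl.L, (w = u ∨ w = v ∨ List.Sublist [u, w, v] (gl.P d).support) →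
      gl.le u w ∧ gl.le w v

/-- The grain line is free: the graph `⋃𝒫` it defines is infinitely
edge-connected. -/
def Free (gl : GrainLine G x y) : Prop := InfEdgeConnOn gl.union gl.supp

/-- The grain line is wildly presented. -/
def WildlyPresented (gl : GrainLine G x y) : Prop :=
  ∀ n : ℕ, 1 ≤ n → ∀ u v : V, u ∈ gl.Llt n → v ∈ gl.Llt n → u ≠ v → gl.le u v →
    ∃ w ∈ gl.L, w ≠ u ∧ w ≠ v ∧ gl.le u w ∧ gl.le w v ∧
      List.Sublist [u, w, v] (gl.P n).support

end GrainLine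

/-- `G` is a generalised halved Farey graph: it is defined by a grain line
satisfying (GL2') and (GL3'). -/
def IsGenHalvedFarey {V : Type*} (G : SimpleGraph V) : Prop :=
  ∃ (x y : V) (gl : GrainLine G x y),
    (∀ v : V, v ∈ gl.L) ∧
    (∀ u v : V, gl.le u v ↔ (u = v ∨ ∃ n, Before (gl.P n).support u v)) ∧
    (∀ u v : V, G.Adj u v ↔ ∃ n, s(u, v) ∈ (gl.P n).edges)
/-- `{A, B}` is a compound-separation of `G`. -/
def IsCompoundSep {V : Type*} (G : SimpleGraph V) (A B : Set V) : Prop :=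
  A ∪ B = Set.univ ∧ (A \ B).Nonempty ∧ (B \ A).Nonempty ∧ (A ∩ B).Finite ∧
    {p : V × V | G.Adj p.1 p.2 ∧ p.1 ∈ A \ B ∧ p.2 ∈ B \ A}.Finite

/-- The separation `{A, B}` separates the vertices `u` and `v`. -/
def SepPair {V : Type*} (A B : Set V) (u v : V) : Prop :=
  (u ∈ A \ B ∧ v ∈ B \ A) ∨ (u ∈ B \ A ∧ v ∈ A \ B)

/-- The compound-separation `{A, B}` separates `u` and `v` minimally. -/
def MinSeps {V : Type*} (G : SimpleGraph V) (A B : Set V) (u v : V) : Prop :=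
  SepPair A B u v ∧
    ∀ C D : Set V, IsCompoundSep G C D → C ∩ D ⊂ A ∩ B → ¬ SepPair C D u v

/-- `{A, B}` is a unitary compound-separation of `G` with separator `w`. -/
def IsUnitaryCSep {V : Type*} (G : SimpleGraph V) (A B : Set V) (w : V) : Prop :=
  IsCompoundSep G A B ∧ A ∩ B = {w}

/-- `w` is a compound-cutvertex of `G`. -/
def IsCompoundCutvertex {V : Type*} (G : SimpleGraph V) (w : V) : Prop :=
  ∃ A B, IsUnitaryCSep G A B w

/-- `G` is `k`-compound-connected: no compound-separation of order `< k`
separates any two vertices. -/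
def kCompConn {V : Type*} (G : SimpleGraph V) (k : ℕ) : Prop :=
  ∀ A B : Set V, IsCompoundSep G A B → (A ∩ B).ncard < k →
    ∀ u v : V, ¬ SepPair A B u v

/-- `u` and `v` cannot be separated by deleting finitely many edges. -/
def FinEdgeConn {V : Type*} (G : SimpleGraph V) (u v : V) : Prop :=
  ∀ F : Set (Sym2 V), F.Finite → (G.deleteEdges F).Reachable u v

/-- `G` is a Π-graph: it is infinitely edge-connected but has no two vertices
linked by infinitely many pairwise internally disjoint paths. -/
def PiGraph {V : Type*} (G : SimpleGraph V) : Prop :=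
  InfEdgeConn G ∧
    ∀ u v : V, u ≠ v →
      ¬ ∃ P : ℕ → G.Walk u v, (∀ n, (P n).IsPath) ∧
          ∀ m n, m ≠ n → ∀ w ∈ (P m).support, w ∈ (P n).support → w = u ∨ w = v

/-- `H` is a `k`-bounded minor of `G`: there are disjoint nonempty connected
branch sets of size `< k`. -/
def IsBddMinor {VH VG : Type*} (H : SimpleGraph VH) (G : SimpleGraph VG) (k : ℕ) : Prop :=
  ∃ B : VH → Set VG,
    (∀ h, (B h).Nonempty) ∧
    (∀ h, (B h).Finite ∧ (B h).ncard < k) ∧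
    (∀ h h', h ≠ h' → Disjoint (B h) (B h')) ∧
    (∀ h, (G.induce (B h)).Connected) ∧
    (∀ h h', H.Adj h h' → ∃ a ∈ B h, ∃ b ∈ B h', G.Adj a b)

/-- The order on oriented separations: `(A,B) ≤ (C,D)` iff `A ⊆ C` and `D ⊆ B`. -/
def osLE {V : Type*} (s t : Set V × Set V) : Prop := s.1 ⊆ t.1 ∧ t.2 ⊆ s.2

/-- The reverse orientation of an oriented separation. -/
def swapSep {V : Type*} (s : Set V × Set V) : Set V × Set V := (s.2, s.1)

/-- Two (unordered) separations, given by representative orientations, are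
nested: they have comparable orientations. -/
def NestedSep {V : Type*} (s t : Set V × Set V) : Prop :=
  osLE s t ∨ osLE t s ∨ osLE s (swapSep t) ∨ osLE (swapSep s) t

/-- `σ` is an orientation of the set `N` of separations which is a star. -/
def IsStarOrientation {V : Type*} (N σ : Set (Set V × Set V)) : Prop :=
  (∀ s ∈ N, s ∈ σ ∨ swapSep s ∈ σ) ∧
  (∀ s ∈ N, ¬ (s ∈ σ ∧ swapSep s ∈ σ)) ∧
  (∀ t ∈ σ, t ∈ N ∨ swapSep t ∈ N) ∧
  (∀ s ∈ σ, ∀ t ∈ σ, s ≠ t → osLE s (swapSep t))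

/-- The set `N` of unitary compound-separations is faithful to the
compound-cutvertex `w` in `G`. -/
def FaithfulToVert {V : Type*} (G : SimpleGraph V) (N : Set (Set V × Set V)) (w : V) : Prop :=
  (∃ σ, IsStarOrientation {s ∈ N | s.1 ∩ s.2 = {w}} σ) ∧
  ∀ u v : V, (∃ A B, IsUnitaryCSep G A B w ∧ SepPair A B u v) →
    ∃ s ∈ N, s.1 ∩ s.2 = {w} ∧ SepPair s.1 s.2 u v

/-- The set `N` of unitary compound-separations is faithful to `G`. -/
def FaithfulSet {V : Type*} (G : SimpleGraph V) (N : Set (Set V × Set V)) : Prop :=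
  ∀ w : V, IsCompoundCutvertex G w → FaithfulToVert G N w

/-- A set of graphs is typical for the class of infinitely edge-connected
graphs with regard to the topological minor relation. -/
def TypicalTopMinor (𝓗 : Set (Σ V : Type, SimpleGraph V)) : Prop :=
  ∀ (W : Type) (G : SimpleGraph W), InfEdgeConn G → ∃ H ∈ 𝓗, TopMinor H.2 G

/-!
For `v ∈ L`, call a vertex `z` of `⋃𝒫` left of `v` if `z` precedes `v` on some path `P d` that
is not the first path through `v`. Well-structuredness makes this independent of `d`, makes it
agree with `<_L` on `L`, and makes it invariant along the edges of such paths that avoid `v`.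
Hence a walk in `⋃𝒫` that avoids `v` but meets both sides of `v` uses one of the finitely many
edges of the paths `P d` with `d` at most the depth of `v`, and by edge-disjointness only
finitely many `Q n` do so. Applied to the `Q n` and their subpaths, this shows that `M` is an
interval of `L` and that `≤_M` keeps the `≤_L`-middle element of any three in the middle, which
forces `≤_M` to be `≤_L` or its reverse. Finally `M ⊆ L`, since a vertex outside `L` lies on a
single path `P d`, which has only finitely many edges at it.
-/

open Filter List

structure IsLinearOrderOn {α : Type*} (r : α → α → Prop) (s : Set α) : Prop where
  refl : ∀ a ∈ s, r a a
  trans : ∀ a ∈ s, ∀ b ∈ s, ∀ c ∈ s, r a b → r b c → r a c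
  antisymm : ∀ a ∈ s, ∀ b ∈ s, r a b → r b a → a = b
  total : ∀ a ∈ s, ∀ b ∈ s, r a b ∨ r b a

namespace IsLinearOrderOn

variable {α : Type*} {r q : α → α → Prop} {s : Set α}

theorem mono (h : IsLinearOrderOn r s) {t : Set α} (hts : t ⊆ s) : IsLinearOrderOn r t where
  refl a ha := h.refl a (hts ha)
  trans a ha b hb c hc := h.trans a (hts ha) b (hts hb) c (hts hc)
  antisymm a ha b hb := h.antisymm a (hts ha) b (hts hb)
  total a ha b hb := h.total a (hts ha) b (hts hb)

protected theorem flip (h : IsLinearOrderOn r s) : IsLinearOrderOn (flip r) s where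
  refl := h.refl
  trans a ha b hb c hc hab hbc := h.trans c hc b hb a ha hbc hab
  antisymm a ha b hb hab hba := h.antisymm a ha b hb hba hab
  total a ha b hb := h.total b hb a ha

theorem iff_of_imp (hr : IsLinearOrderOn r s) (hq : IsLinearOrderOn q s)
    (h : ∀ a ∈ s, ∀ b ∈ s, r a b → q a b) : ∀ a ∈ s, ∀ b ∈ s, q a b ↔ r a b := by
  refine fun a ha b hb => ⟨fun hab => ?_, h a ha b hb⟩
  rcases hr.total a ha b hb with hrab | hrba
  · exact hrab
  · obtain rfl := hq.antisymm a ha b hb hab (h b hb a ha hrba)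
    exact hr.refl a ha

theorem iff_of_between_of_min (hr : IsLinearOrderOn r s) (hq : IsLinearOrderOn q s) {m : α}
    (hm : m ∈ s) (hqm : ∀ a ∈ s, q m a) (hrm : ∀ a ∈ s, r m a)
    (hbtw : ∀ a ∈ s, ∀ b ∈ s, ∀ c ∈ s, a ≠ b → b ≠ c → r a b → r b c →
      (q a b ∧ q b c) ∨ (q c b ∧ q b a)) :
    ∀ a ∈ s, ∀ b ∈ s, q a b ↔ r a b := by
  refine hr.iff_of_imp hq fun a ha b hb hab => ?_
  by_cases hma : m = a
  · exact hma ▸ hqm b hb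
  by_cases hab' : a = b
  · exact hab' ▸ hq.refl a ha
  rcases hbtw m hm a ha b hb hma hab' (hrm a ha) hab with h | ⟨-, hqam⟩
  · exact h.2
  · exact absurd (hq.antisymm m hm a ha (hqm a ha) hqam) hma

theorem iff_or_iff_flip_of_between (hr : IsLinearOrderOn r s) (hq : IsLinearOrderOn q s)
    {m : α} (hm : m ∈ s) (hqm : ∀ a ∈ s, q m a)
    (hbtw : ∀ a ∈ s, ∀ b ∈ s, ∀ c ∈ s, a ≠ b → b ≠ c → r a b → r b c →
      (q a b ∧ q b c) ∨ (q c b ∧ q b a)) :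
    (∀ a ∈ s, ∀ b ∈ s, q a b ↔ r a b) ∨ (∀ a ∈ s, ∀ b ∈ s, q a b ↔ r b a) := by
  -- The `q`-minimum `m` is never strictly `r`-between two elements, so it is `r`-extremal.
  have extremal : ∀ a ∈ s, ∀ c ∈ s, r a m → r m c → a = m ∨ c = m := by
    intro a ha c hc ham hmc
    by_contra! hne
    rcases hbtw a ha m hm c hc hne.1 (Ne.symm hne.2) ham hmc with h | h
    · exact hne.1 (hq.antisymm a ha m hm h.1 (hqm a ha))
    · exact hne.2 (hq.antisymm c hc m hm h.1 (hqm c hc))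
  by_cases hmin : ∀ a ∈ s, r m a
  · exact Or.inl (hr.iff_of_between_of_min hq hm hqm hmin hbtw)
  obtain ⟨a, ha, hma⟩ : ∃ a ∈ s, ¬ r m a := by simpa only [not_forall, exists_prop] using hmin
  have ham : r a m := (hr.total m hm a ha).resolve_left hma
  have hmax : ∀ c ∈ s, r c m := fun c hc =>
    (hr.total c hc m hm).elim id fun hmc =>
      ((extremal a ha c hc ham hmc).resolve_left fun h => hma (h ▸ hr.refl a ha)) ▸ hmc
  refine Or.inr (hr.flip.iff_of_between_of_min hq hm hqm hmax ?_)
  intro a ha b hb c hc hab hbc h₁ h₂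
  exact (hbtw c hc b hb a ha hbc.symm hab.symm h₂ h₁).symm

end IsLinearOrderOn

namespace List

variable {α : Type*} {l : List α} {a b c z : α}

theorem Nodup.pair_sublist_trans (hl : l.Nodup) (h₁ : [a, b] <+ l) (h₂ : [b, c] <+ l) :
    [a, c] <+ l := by
  induction l with
  | nil => simp at h₁
  | cons d l ih =>
    simp only [sublist_cons_iff, nodup_cons] at *
    grind

theorem pair_sublist_total (ha : a ∈ l) (hb : b ∈ l) (hab : a ≠ b) :
    [a, b] <+ l ∨ [b, a] <+ l := by
  induction l with
  | nil => simp at ha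
  | cons d l ih =>
    simp only [sublist_cons_iff] at *
    grind

theorem Nodup.triple_sublist (hl : l.Nodup) (h₁ : [a, b] <+ l) (h₂ : [b, c] <+ l) :
    [a, b, c] <+ l := by
  induction l with
  | nil => simp at h₁
  | cons d l ih =>
    simp only [sublist_cons_iff, nodup_cons] at *
    grind

theorem Nodup.exists_first {p : α → Prop} (hl : l.Nodup) (hb : b ∈ l) (hpb : p b) :
    ∃ w ∈ l, p w ∧ ∀ t, p t → ¬ [t, w] <+ l := by
  induction l with
  | nil => simp at hb
  | cons d l ih =>
    by_cases hpd : p d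
    · refine ⟨d, mem_cons_self, hpd, fun t _ h => ?_⟩
      simp only [sublist_cons_iff, nodup_cons] at *
      grind
    · simp only [sublist_cons_iff, nodup_cons, mem_cons] at *
      grind

theorem Nodup.exists_last {p : α → Prop} (hl : l.Nodup) (hb : b ∈ l) (hpb : p b) :
    ∃ u ∈ l, p u ∧ ∀ t, p t → ¬ [u, t] <+ l := by
  obtain ⟨u, hu, hpu, h⟩ := (nodup_reverse.mpr hl).exists_first (mem_reverse.mpr hb) hpb
  exact ⟨u, mem_reverse.mp hu, hpu, fun t ht hut => h t ht (by simpa using hut.reverse)⟩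

theorem Nodup.exists_gap {p : α → Prop} (hl : l.Nodup) (ha : [a, z] <+ l) (hb : [z, b] <+ l)
    (hpa : p a) (hpb : p b) (hpz : ¬ p z) :
    ∃ u w, p u ∧ p w ∧ [u, z] <+ l ∧ [z, w] <+ l ∧
      ∀ t, p t → [u, t] <+ l → ¬ [t, w] <+ l := by
  obtain ⟨u, -, ⟨hpu, huz⟩, hu⟩ := hl.exists_last (p := fun t => p t ∧ [t, z] <+ l)
    (ha.subset (by simp)) ⟨hpa, ha⟩
  obtain ⟨w, -, ⟨hpw, hzw⟩, hw⟩ := hl.exists_first (p := fun t => p t ∧ [z, t] <+ l)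
    (hb.subset (by simp)) ⟨hpb, hb⟩
  refine ⟨u, w, hpu, hpw, huz, hzw, fun t hpt hut htw => ?_⟩
  have htz : t ≠ z := fun h => hpz (h ▸ hpt)
  rcases pair_sublist_total (htw.subset (by simp)) (huz.subset (by simp)) htz with h | h
  · exact hu t ⟨hpt, h⟩ hut
  · exact hw t ⟨hpt, h⟩ htw

end List

namespace SimpleGraph.Walk

variable {V : Type*} {G : SimpleGraph V} {u v a b z : V}

theorem pair_sublist_support_of_ne_start (p : G.Walk u v) (hz : z ∈ p.support) (hzu : z ≠ u) :
    [u, z] <+ p.support := by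
  rw [← cons_tail_support] at hz ⊢
  exact (singleton_sublist.mpr ((mem_cons.mp hz).resolve_left hzu)).cons_cons u

theorem pair_sublist_support_of_ne_end (p : G.Walk u v) (hz : z ∈ p.support) (hzv : z ≠ v) :
    [z, v] <+ p.support := by
  simpa using (p.reverse.pair_sublist_support_of_ne_start (by simpa using hz) hzv).reverse

theorem IsPath.not_triple_sublist_of_mem_edges {p : G.Walk u v} (hp : p.IsPath)
    (he : s(a, b) ∈ p.edges) : ¬ [a, z, b] <+ p.support := by
  induction p with
  | nil => simp at he
  | @cons w w' _ h p ih =>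
    rw [cons_isPath_iff] at hp
    have hnd := hp.1.support_nodup
    have hww' := h.ne
    have hmem : s(a, b) ∈ p.edges → a ∈ p.support := p.fst_mem_support_of_mem_edges
    have htail : ∀ x, [x] <+ p.support.tail → x ∈ p.support := fun x hx =>
      mem_of_mem_tail (hx.subset (mem_singleton_self x))
    rw [support_cons, ← cons_tail_support, edges_cons, mem_cons, Sym2.eq_iff] at *
    simp only [sublist_cons_iff, nodup_cons, mem_cons] at *
    grind

theorem IsPath.exists_walk_after {p : G.Walk u v} (hp : p.IsPath) (h : [b, a] <+ p.support) :
    ∃ w, ∃ q : G.Walk w v, q.edges ⊆ p.edges ∧ b ∉ q.support ∧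
      ∀ z, [b, z] <+ p.support → z ∈ q.support := by
  induction p with
  | nil => simp at h
  | @cons w w' _ h' p ih =>
    rw [cons_isPath_iff] at hp
    simp only [support_cons, sublist_cons_iff] at h ⊢
    by_cases hb : b = w
    · subst hb
      exact ⟨_, p, by simp, hp.2, fun z hz => by grind [Sublist.subset]⟩
    · obtain ⟨x, q, hqe, hbq, hq⟩ := ih hp.1 (by grind)
      exact ⟨x, q, fun e he => by simpa using Or.inr (hqe he), hbq, fun z hz => hq z (by grind)⟩

end SimpleGraph.Walk

theorem eventually_forall_edges_notMem {V : Type*} {G : SimpleGraph V} {s t : V}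
    {Q : ℕ → G.Walk s t} (hQ : ∀ m n, m ≠ n → EdgeDisjW (Q m) (Q n))
    {S : Set (Sym2 V)} (hS : S.Finite) : ∀ᶠ n in atTop, ∀ e ∈ (Q n).edges, e ∉ S := by
  have hfin : {n | ∃ e ∈ (Q n).edges, e ∈ S}.Finite := by
    refine (hS.biUnion fun e _ => Set.Subsingleton.finite (s := {n | e ∈ (Q n).edges}) ?_).subset
      fun n ⟨e, he, heS⟩ => Set.mem_biUnion heS he
    intro m hm n hn
    by_contra hmn
    exact hQ m n hmn e hm hn
  filter_upwards [Nat.cofinite_eq_atTop ▸ hfin.compl_mem_cofinite] with n hn e he heS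
  exact hn ⟨e, he, heS⟩

namespace GrainLine

variable {V : Type*} {G : SimpleGraph V} {x y : V} (gl : GrainLine G x y) {u v w z : V} {d : ℕ}

theorem isLinearOrderOn : IsLinearOrderOn gl.le gl.L :=
  ⟨gl.le_refl, gl.le_trans, gl.le_antisymm, gl.le_total⟩

theorem eventually_mem_support (hv : v ∈ gl.L) : ∀ᶠ n in atTop, v ∈ (gl.P n).support := by
  obtain ⟨N, hN⟩ := (gl.gl1 v).mp hv
  exact eventually_atTop.mpr ⟨N, fun n hn => (hN n).mpr hn⟩

theorem eventually_mem_Llt (hv : v ∈ gl.L) : ∀ᶠ n in atTop, v ∈ gl.Llt n := by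
  obtain ⟨N, hN⟩ := (gl.gl1 v).mp hv
  exact eventually_atTop.mpr ⟨N + 1, fun n hn => ⟨hv, N, by omega, (hN N).mpr le_rfl⟩⟩

theorem eventually_notMem_support (hv : v ∉ gl.L) : ∀ᶠ n in atTop, v ∉ (gl.P n).support := by
  by_cases h : ∃ m, v ∈ (gl.P m).support
  · obtain ⟨m, hm⟩ := h
    filter_upwards [eventually_gt_atTop m] with n hn
    exact gl.gl2 m v hm hv n hn.ne'
  · exact Eventually.of_forall fun n hn => h ⟨n, hn⟩

theorem mem_support_of_mem_Llt (hv : v ∈ gl.Llt d) : v ∈ (gl.P d).support := by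
  obtain ⟨hvL, m, hmd, hvm⟩ := hv
  obtain ⟨N, hN⟩ := (gl.gl1 v).mp hvL
  exact (hN d).mpr (((hN m).mp hvm).trans hmd.le)

theorem start_mem_Llt (hd : 0 < d) : x ∈ gl.Llt d :=
  ⟨gl.x_mem, 0, hd, (gl.P 0).start_mem_support⟩

theorem end_mem_Llt (hd : 0 < d) : y ∈ gl.Llt d :=
  ⟨gl.y_mem, 0, hd, (gl.P 0).end_mem_support⟩

theorem le_iff_sublist (hu : u ∈ gl.Llt d) (hv : v ∈ gl.Llt d) (huv : u ≠ v) :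
    gl.le u v ↔ [u, v] <+ (gl.P d).support :=
  gl.gl3 d (by obtain ⟨-, m, hm, -⟩ := hu; omega) u v hu.1 hv.1 hu.2 hv.2 huv

theorem le_of_not_sublist (hu : u ∈ gl.Llt d) (hv : v ∈ gl.Llt d)
    (h : ¬ [v, u] <+ (gl.P d).support) : gl.le u v := by
  by_cases huv : u = v
  · exact huv ▸ gl.le_refl u hu.1
  have := pair_sublist_total (gl.mem_support_of_mem_Llt hu) (gl.mem_support_of_mem_Llt hv) huv
  exact (gl.le_iff_sublist hu hv huv).mpr (this.resolve_right h)

theorem isSegEnds_of_gap (hu : u ∈ gl.Llt d) (hw : w ∈ gl.Llt d)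
    (huw : [u, w] <+ (gl.P d).support)
    (hgap : ∀ t ∈ gl.Llt d, [u, t] <+ (gl.P d).support → ¬ [t, w] <+ (gl.P d).support) :
    gl.IsSegEnds d u w := by
  have hne : u ≠ w := by
    rintro rfl
    exact nodup_iff_sublist.mp (gl.isPath d).support_nodup u huw
  refine ⟨hu, hw, hne, (gl.le_iff_sublist hu hw hne).mpr huw, fun t ht hut htw => ?_⟩
  by_contra! h
  exact hgap t ht ((gl.le_iff_sublist hu ht h.1.symm).mp hut) ((gl.le_iff_sublist ht hw h.2).mp htw)

variable {gl}

theorem sublist_iff_le (hws : gl.WellStructured) (hv : v ∈ gl.Llt d) (hzL : z ∈ gl.L)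
    (hz : z ∈ (gl.P d).support) (hzv : z ≠ v) : [z, v] <+ (gl.P d).support ↔ gl.le z v := by
  by_cases hzd : z ∈ gl.Llt d
  · exact (gl.le_iff_sublist hzd hv hzv).symm
  have hnd := (gl.isPath d).support_nodup
  have hd : 0 < d := by obtain ⟨-, m, hm, -⟩ := hv; omega
  have hx := gl.start_mem_Llt hd
  have hy := gl.end_mem_Llt hd
  -- `z` lies inside a `𝒫`-segment `u P_d w`, which `v` does not enter
  obtain ⟨u, w, hu, hw, huz, hzw, hgap⟩ := hnd.exists_gap
    ((gl.P d).pair_sublist_support_of_ne_start hz fun h => hzd (h ▸ hx))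
    ((gl.P d).pair_sublist_support_of_ne_end hz fun h => hzd (h ▸ hy)) hx hy hzd
  obtain ⟨hleu, hlew⟩ := hws d u w (gl.isSegEnds_of_gap hu hw (hnd.pair_sublist_trans huz hzw) hgap)
    z hzL (Or.inr (Or.inr (hnd.triple_sublist huz hzw)))
  constructor
  · intro hzv'
    have hwv := gl.le_of_not_sublist hw hv (hgap v hv (hnd.pair_sublist_trans huz hzv'))
    exact gl.le_trans z hzL w hw.1 v hv.1 hlew hwv
  · intro hle
    by_contra hzv'
    have hvz := (pair_sublist_total hz (gl.mem_support_of_mem_Llt hv) hzv).resolve_left hzv'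
    have hvu := gl.le_of_not_sublist hv hu fun huv => hgap v hv huv (hnd.pair_sublist_trans hvz hzw)
    exact hzd (gl.le_antisymm u hu.1 z hzL hleu (gl.le_trans z hzL v hv.1 u hu.1 hle hvu) ▸ hu)

variable (gl) in
def IsLeftOf (z v : V) : Prop := ∃ d, v ∈ gl.Llt d ∧ [z, v] <+ (gl.P d).support

theorem IsLeftOf.sublist (hws : gl.WellStructured) (h : gl.IsLeftOf z v) (hv : v ∈ gl.Llt d)
    (hz : z ∈ (gl.P d).support) : [z, v] <+ (gl.P d).support := by
  obtain ⟨d', hv', hzv'⟩ := h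
  have hzv : z ≠ v := by
    rintro rfl
    exact nodup_iff_sublist.mp (gl.isPath d').support_nodup z hzv'
  have hz' : z ∈ (gl.P d').support := hzv'.subset (by simp)
  by_cases hzL : z ∈ gl.L
  · exact (sublist_iff_le hws hv hzL hz hzv).mpr ((sublist_iff_le hws hv' hzL hz' hzv).mp hzv')
  · obtain rfl : d = d' := by
      by_contra hdd
      exact gl.gl2 d' z hz' hzL d hdd hz
    exact hzv'

theorem isLeftOf_iff_le (hws : gl.WellStructured) (hv : v ∈ gl.L) (hz : z ∈ gl.L) (hzv : z ≠ v) :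
    gl.IsLeftOf z v ↔ gl.le z v := by
  constructor
  · rintro ⟨d, hvd, h⟩
    exact (sublist_iff_le hws hvd hz (h.subset (by simp)) hzv).mp h
  · intro hle
    obtain ⟨d, hvd, hzd⟩ := ((gl.eventually_mem_Llt hv).and (gl.eventually_mem_support hz)).exists
    exact ⟨d, hvd, (sublist_iff_le hws hvd hz hzd hzv).mpr hle⟩

theorem IsLeftOf.of_mem_edges (hws : gl.WellStructured) (h : gl.IsLeftOf u v)
    (he : s(u, w) ∈ (gl.P d).edges) (hv : v ∈ gl.Llt d) (hwv : w ≠ v) : gl.IsLeftOf w v := by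
  have huv := h.sublist hws hv ((gl.P d).fst_mem_support_of_mem_edges he)
  refine ⟨d, hv, ?_⟩
  refine (pair_sublist_total ((gl.P d).snd_mem_support_of_mem_edges he)
    (gl.mem_support_of_mem_Llt hv) hwv).resolve_right fun hvw => ?_
  exact (gl.isPath d).not_triple_sublist_of_mem_edges he
    ((gl.isPath d).support_nodup.triple_sublist huv hvw)

variable (gl) in
def shallowEdges (v : V) : Set (Sym2 V) := {e | ∃ d, e ∈ (gl.P d).edges ∧ v ∉ gl.Llt d}

theorem shallowEdges_finite (hv : v ∈ gl.L) : (gl.shallowEdges v).Finite := by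
  obtain ⟨N, hN⟩ := eventually_atTop.mp (gl.eventually_mem_Llt hv)
  refine ((Set.finite_lt_nat N).biUnion fun d _ => (gl.P d).edges.finite_toSet).subset ?_
  rintro e ⟨d, he, hvd⟩
  exact Set.mem_biUnion (lt_of_not_ge fun h => hvd (hN d h)) he

theorem exists_mem_edges_of_mem_edgeSet {e : Sym2 V} (he : e ∈ gl.union.edgeSet) :
    ∃ d, e ∈ (gl.P d).edges := by
  induction e using Sym2.ind
  exact he

theorem isLeftOf_iff_of_mem_support (hws : gl.WellStructured) {a b : V} (W : gl.union.Walk a b)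
    (hvW : v ∉ W.support) (hW : ∀ e ∈ W.edges, e ∉ gl.shallowEdges v) (hz : z ∈ W.support) :
    gl.IsLeftOf z v ↔ gl.IsLeftOf a v := by
  induction W with
  | nil => rw [Walk.support_nil, mem_singleton] at hz; rw [hz]
  | @cons a c b h W ih =>
    obtain ⟨d, hd⟩ := id h
    have hvd : v ∈ gl.Llt d := by
      by_contra hvd
      exact hW _ (by simp) ⟨d, hd, hvd⟩
    simp only [Walk.support_cons, mem_cons, not_or, Walk.edges_cons] at hz hvW hW
    have hac : gl.IsLeftOf c v ↔ gl.IsLeftOf a v :=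
      ⟨fun h => h.of_mem_edges hws (Sym2.eq_swap ▸ hd) hvd (Ne.symm hvW.1),
        fun h => h.of_mem_edges hws hd hvd (W.start_mem_support.ne_of_notMem hvW.2)⟩
    rcases hz with rfl | hz
    · rfl
    · exact (ih hvW.2 (fun e he => hW e (Or.inr he)) hz).trans hac

theorem le_iff_le_of_mem_support (hws : gl.WellStructured) (hv : v ∈ gl.L) {a b : V}
    (W : gl.union.Walk a b) (hvW : v ∉ W.support) (hW : ∀ e ∈ W.edges, e ∉ gl.shallowEdges v)
    (hu : u ∈ W.support) (hw : w ∈ W.support) (huL : u ∈ gl.L) (hwL : w ∈ gl.L) :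
    gl.le u v ↔ gl.le w v := by
  rw [← isLeftOf_iff_le hws hv huL (fun h => hvW (h ▸ hu)),
    ← isLeftOf_iff_le hws hv hwL (fun h => hvW (h ▸ hw)),
    isLeftOf_iff_of_mem_support hws W hvW hW hu, isLeftOf_iff_of_mem_support hws W hvW hW hw]

theorem exists_mem_edges_of_mem_support {s t : V} (W : gl.union.Walk s t) (hst : s ≠ t)
    (hz : z ∈ W.support) : ∃ e ∈ W.edges, z ∈ e ∧ ∃ d, e ∈ (gl.P d).edges := by
  obtain ⟨e, he, hze⟩ :=
    (Walk.mem_support_iff_exists_mem_edges_of_not_nil (Walk.not_nil_of_ne hst)).mp hz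
  exact ⟨e, he, hze, gl.exists_mem_edges_of_mem_edgeSet (W.edges_subset_edgeSet he)⟩

theorem not_sublist_and_sublist (hws : gl.WellStructured) {a b c : V} (hb : b ∈ gl.L)
    {s t : V} {Q : gl.union.Walk s t} (hQ : Q.IsPath) (hQb : ∀ e ∈ Q.edges, e ∉ gl.shallowEdges b)
    (ha : a ∈ gl.L) (hc : c ∈ gl.L) (hab : gl.le a b) (hbc : gl.le b c) (hcb : c ≠ b) :
    ¬ ([b, a] <+ Q.support ∧ [b, c] <+ Q.support) := by
  rintro ⟨hba, hbc'⟩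
  obtain ⟨_, W, hWQ, hbW, hW⟩ := hQ.exists_walk_after hba
  have hcb' := (gl.le_iff_le_of_mem_support hws hb W hbW (fun e he => hQb e (hWQ he))
    (hW a hba) (hW c hbc') ha hc).mp hab
  exact hcb (gl.le_antisymm c hc b hb hcb' hbc)

variable {x' y' : V} (gl' : GrainLine gl.union x' y')

theorem L_subset_of_union : gl'.L ⊆ gl.L := by
  intro v hvM
  by_contra hvL
  obtain ⟨n, hvn⟩ := (gl'.eventually_mem_support hvM).exists
  obtain ⟨e₀, -, hve₀, d, hed₀⟩ := gl.exists_mem_edges_of_mem_support _ gl'.ne_xy hvn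
  obtain ⟨m, hvm, hm⟩ := ((gl'.eventually_mem_support hvM).and
    (eventually_forall_edges_notMem gl'.edgeDisj (gl.P d).edges.finite_toSet)).exists
  obtain ⟨e, he, hve', d', hed'⟩ := gl.exists_mem_edges_of_mem_support _ gl'.ne_xy hvm
  -- outside `L`, the vertex `v` lies on the single path `P d`, which carries all its edges
  obtain rfl : d' = d := by
    by_contra hdd
    exact gl.gl2 d v (Walk.mem_support_of_mem_edges hed₀ hve₀) hvL d' hdd
      (Walk.mem_support_of_mem_edges hed' hve')
  exact hm e he hed'

theorem mem_L_of_le_of_le (hws : gl.WellStructured) (hu : u ∈ gl'.L) (hw : w ∈ gl'.L)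
    (hv : v ∈ gl.L) (huv : gl.le u v) (hvw : gl.le v w) : v ∈ gl'.L := by
  by_contra hvM
  have hsub := L_subset_of_union gl'
  obtain ⟨n, ⟨⟨hun, hwn⟩, hvn⟩, hn⟩ := (((gl'.eventually_mem_support hu).and
    (gl'.eventually_mem_support hw)).and (gl'.eventually_notMem_support hvM)).and
    (eventually_forall_edges_notMem gl'.edgeDisj (gl.shallowEdges_finite hv)) |>.exists
  have hside := gl.le_iff_le_of_mem_support hws hv (gl'.P n) hvn hn hun hwn (hsub hu) (hsub hw)
  exact hvn (gl.le_antisymm w (hsub hw) v hv (hside.mp huv) hvw ▸ hwn)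

theorem le_and_le_or_le_and_le (hws : gl.WellStructured) {a b c : V} (ha : a ∈ gl'.L)
    (hb : b ∈ gl'.L) (hc : c ∈ gl'.L) (hab : a ≠ b) (hbc : b ≠ c) (h₁ : gl.le a b)
    (h₂ : gl.le b c) : (gl'.le a b ∧ gl'.le b c) ∨ (gl'.le c b ∧ gl'.le b a) := by
  have hsub := L_subset_of_union gl'
  obtain ⟨n, ⟨⟨han, hbn⟩, hcn⟩, hn⟩ := (((gl'.eventually_mem_Llt ha).and
    (gl'.eventually_mem_Llt hb)).and (gl'.eventually_mem_Llt hc)).and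
    (eventually_forall_edges_notMem gl'.edgeDisj (gl.shallowEdges_finite (hsub hb))) |>.exists
  have hQ := gl'.isPath n
  have not_both_after := fun {s t : V} (Q : gl.union.Walk s t) hpath hshallow =>
    not_sublist_and_sublist hws (hsub hb) (Q := Q) hpath hshallow (hsub ha) (hsub hc) h₁ h₂
      hbc.symm
  rw [gl'.le_iff_sublist han hbn hab, gl'.le_iff_sublist hbn hcn hbc,
    gl'.le_iff_sublist hcn hbn hbc.symm, gl'.le_iff_sublist hbn han hab.symm]
  -- unless `b` lies between `a` and `c` on `Q n`, both lie on the same side of `b` along `Q n`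
  rcases pair_sublist_total (gl'.mem_support_of_mem_Llt han) (gl'.mem_support_of_mem_Llt hbn) hab
    with hab' | hba' <;>
  rcases pair_sublist_total (gl'.mem_support_of_mem_Llt hbn) (gl'.mem_support_of_mem_Llt hcn) hbc
    with hbc' | hcb'
  · exact Or.inl ⟨hab', hbc'⟩
  · exact absurd ⟨by simpa using hab'.reverse, by simpa using hcb'.reverse⟩
      (not_both_after _ hQ.reverse (by simpa using hn))
  · exact absurd ⟨hba', hbc'⟩ (not_both_after _ hQ hn)
  · exact Or.inr ⟨hcb', hba'⟩

end GrainLine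

/-- a grain line inside the graph defined by a well-structured
grain line has its limit set an interval of `L`, ordered by `≤_L` or its
reverse. -/
theorem grainline_in_wellStructured_is_interval {V : Type*} {G : SimpleGraph V}
    {x y x' y' : V} (gl : GrainLine G x y) (hws : gl.WellStructured)
    (gl' : GrainLine gl.union x' y') :
    gl'.L ⊆ gl.L ∧
    (∀ u ∈ gl'.L, ∀ w ∈ gl'.L, ∀ v ∈ gl.L, gl.le u v → gl.le v w → v ∈ gl'.L) ∧
    ((∀ u ∈ gl'.L, ∀ v ∈ gl'.L, (gl'.le u v ↔ gl.le u v)) ∨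
     (∀ u ∈ gl'.L, ∀ v ∈ gl'.L, (gl'.le u v ↔ gl.le v u))) := by
  have hsub := gl.L_subset_of_union gl'
  refine ⟨hsub, fun u hu w hw v hv => gl.mem_L_of_le_of_le gl' hws hu hw hv, ?_⟩
  exact (gl.isLinearOrderOn.mono hsub).iff_or_iff_flip_of_between gl'.isLinearOrderOn
    gl'.x_mem gl'.x_min fun a ha b hb c hc => gl.le_and_le_or_le_and_le gl' hws ha hb hc
end

section
/- Let ((L,≤_L),(P_n)_{n∈ℕ}) be a free and well-structured grain line and let ((M,≤_M),(Q_n)_{n∈ℕ}) be a grain line in the graph ⋃P defined by ((L,≤_L),(P_n)). Then only finitely many vertices of ⋃Q := ⋃_{n∈ℕ} Q_n lie outside of M; in particular, there is a number d ∈ ℕ such that ⋃_{n≥d} Q_n is infinitely edge-connected, i.e. the grain line ((M,≤_M),(Q_n)_{n≥d}) (reindexed over ℕ) is free. -/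
open SimpleGraph

/-!
Freeness forces every vertex of `⋃𝒫` into `L`, so `≤_L` compares any two vertices of the
paths `Q_n`. Well-structuredness shows that an edge of `⋃𝒫` jumping over some `w ∈ L` (its
ends lie strictly on either side of `w`) has depth at most the depth of `w`: otherwise it lies in a `𝒫`-segment
`u P_d v` with `w ∈ L_{<d}` strictly inside `[u, v]`, although `v` is the successor of `u` in
`L_{<d}`. As every `P_n` is finite and the `Q_n` are edge-disjoint, only finitely many `Q_n`
contain an edge of depth at most a given bound.

Now let `w ∉ M` lie on `Q_n`. If `w` were strictly between `x'` and `y'`, every `Q_m` with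
`m ≠ n` would have to jump over `w`, which is impossible for almost all `m`. So `w` lies beyond
`x'` or `y'`, and `Q_n` jumps over that end; this happens only for finitely many `n`, which
bounds both the vertices outside `M` and the index from which on all `Q_n` lie in `M`.
-/

lemma List.exists_cons_eq_append_cons {α : Type*} {p : α → Prop} {c : α} {l : List α}
    (h : ∃ z ∈ c :: l, p z) :
    ∃ l₁ b l₂, c :: l = l₁ ++ b :: l₂ ∧ p b ∧ (∀ z ∈ l₁, ¬ p z) ∧ c ∈ l₁ ++ [b] := by
  induction l generalizing c with
  | nil => exact ⟨[], c, [], rfl, by simpa using h, by simp, by simp⟩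
  | cons d l ih =>
    by_cases hc : p c
    · exact ⟨[], c, d :: l, rfl, hc, by simp, by simp⟩
    · obtain ⟨l₁, b, l₂, hl, hb, hl₁, -⟩ := ih (c := d) (by grind)
      exact ⟨c :: l₁, b, l₂, by rw [hl]; rfl, hb, by grind, by simp⟩

namespace SimpleGraph.Walk

variable {V : Type*} {G : SimpleGraph V}

lemma exists_isPath_of_mem_support {s t u v : V} (p : G.Walk s t) (hu : u ∈ p.support)
    (hv : v ∈ p.support) :
    ∃ q : G.Walk u v, q.IsPath ∧ q.support ⊆ p.support ∧ q.edges ⊆ p.edges := by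
  classical
  let r := (p.takeUntil u hu).reverse.append (p.takeUntil v hv)
  refine ⟨r.bypass, bypass_isPath r, List.Subset.trans (support_bypass_subset_support r) ?_,
    List.Subset.trans (edges_bypass_subset_edges r) ?_⟩
  · intro z hz
    simp only [r, support_append, support_reverse, List.mem_append, List.mem_reverse] at hz
    rcases hz with hz | hz
    exacts [p.support_takeUntil_subset_support hu hz,
      p.support_takeUntil_subset_support hv (List.mem_of_mem_tail hz)]
  · intro e he
    simp only [r, edges_append, edges_reverse, List.mem_append, List.mem_reverse] at he
    rcases he with he | he
    exacts [p.edges_takeUntil_subset_edges hu he, p.edges_takeUntil_subset_edges hv he]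

lemma start_notMem_support_dropUntil [DecidableEq V] {u v w : V} {p : G.Walk u v}
    (hp : p.IsPath) (hw : w ∈ p.support) (hwu : w ≠ u) : u ∉ (p.dropUntil w hw).support := by
  intro hu
  have hnodup := hp.support_nodup
  rw [← p.take_spec hw, support_append] at hnodup
  rw [← cons_tail_support, List.mem_cons] at hu
  exact List.disjoint_of_nodup_append hnodup (p.takeUntil w hw).start_mem_support
    (hu.resolve_left hwu.symm)

lemma mem_of_support_eq_append {x y : V} {p : G.Walk x y} {A B : List V} (hA : A ≠ [])
    (hB : B ≠ []) (h : p.support = A ++ B) : x ∈ A ∧ y ∈ B := by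
  constructor
  · have hx := p.head_support
    simp only [h, List.head_append_of_ne_nil hA] at hx
    exact hx ▸ List.head_mem hA
  · have hy := p.getLast_support
    simp only [h, List.getLast_append_of_ne_nil _ hB] at hy
    exact hy ▸ List.getLast_mem hB

end SimpleGraph.Walk

open Walk

section WalkFamily

variable {V : Type*} {G : SimpleGraph V} {x y : V}

lemma finite_setOf_exists_mem_edges {P : ℕ → G.Walk x y}
    (hP : ∀ m n, m ≠ n → EdgeDisjW (P m) (P n)) {E : Set (Sym2 V)} (hE : E.Finite) :
    {n | ∃ e ∈ E, e ∈ (P n).edges}.Finite := by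
  refine (hE.biUnion fun e _ => Set.Subsingleton.finite (s := {n | e ∈ (P n).edges}) ?_).subset ?_
  · intro m hm n hn
    by_contra hmn
    exact hP m n hmn e hm hn
  · rintro n ⟨e, he, hen⟩
    exact Set.mem_biUnion he hen

lemma InfEdgeConnOn.infinite_incidenceSet {H : SimpleGraph V} {S : Set V}
    (h : InfEdgeConnOn H S) {u : V} (hu : u ∈ S) : (H.incidenceSet u).Infinite := by
  obtain ⟨v, hv, huv⟩ : ∃ v ∈ S, u ≠ v := by
    obtain ⟨a, ha, b, hb, hab⟩ := h.1
    by_cases hua : u = a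
    · exact ⟨b, hb, hua ▸ hab⟩
    · exact ⟨a, ha, hua⟩
  obtain ⟨P, -, hdisj⟩ := h.2 u hu v hv huv
  have hnil (n : ℕ) : ¬ (P n).Nil := not_nil_of_ne huv
  refine Set.infinite_of_injective_forall_mem (f := fun n => s(u, (P n).snd)) ?_ ?_
  · intro m n hmn
    by_contra hne
    have hm := (P m).mk_start_snd_mem_edges (hnil m)
    rw [show s(u, (P m).snd) = s(u, (P n).snd) from hmn] at hm
    exact hdisj m n hne _ hm ((P n).mk_start_snd_mem_edges (hnil n))
  · intro n
    exact ⟨(P n).adj_snd (hnil n), Sym2.mem_mk_left _ _⟩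

lemma mem_edgeSet_walkUnion {P : ℕ → G.Walk x y} {e : Sym2 V} :
    e ∈ (walkUnion P).edgeSet ↔ ∃ n, e ∈ (P n).edges := by
  induction e using Sym2.ind
  rfl

lemma mem_walkSupp_of_mem_support {P : ℕ → G.Walk x y} {s t z : V}
    (W : (walkUnion P).Walk s t) (hst : s ≠ t) (hz : z ∈ W.support) : z ∈ walkSupp P := by
  obtain ⟨e, he, hze⟩ := (mem_support_iff_exists_mem_edges_of_not_nil (not_nil_of_ne hst)).1 hz
  obtain ⟨n, hn⟩ := mem_edgeSet_walkUnion.1 (W.edges_subset_edgeSet he)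
  exact ⟨n, (P n).mem_support_of_mem_edges hn hze⟩

lemma infEdgeConnOn_walkUnion {P : ℕ → G.Walk x y} (hxy : x ≠ y)
    (hP : ∀ m n, m ≠ n → EdgeDisjW (P m) (P n))
    (hev : ∀ v ∈ walkSupp P, ∃ N, ∀ n ≥ N, v ∈ (P n).support) :
    InfEdgeConnOn (walkUnion P) (walkSupp P) := by
  refine ⟨⟨x, ⟨0, start_mem_support _⟩, y, ⟨0, end_mem_support _⟩, hxy⟩, ?_⟩
  intro u hu v hv _
  obtain ⟨Nu, hNu⟩ := hev u hu
  obtain ⟨Nv, hNv⟩ := hev v hv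
  have hpath (k : ℕ) :
      ∃ q : (walkUnion P).Walk u v, q.IsPath ∧ q.edges ⊆ (P (Nu + Nv + k)).edges := by
    obtain ⟨q, hq, -, hqe⟩ := (P (Nu + Nv + k)).exists_isPath_of_mem_support
      (hNu _ (by omega)) (hNv _ (by omega))
    have hH : ∀ e ∈ q.edges, e ∈ (walkUnion P).edgeSet :=
      fun e he => mem_edgeSet_walkUnion.2 ⟨_, hqe he⟩
    exact ⟨q.transfer _ hH, hq.transfer hH, by rwa [edges_transfer]⟩
  choose R hR hRe using hpath
  exact ⟨R, hR, fun m n hmn e hm hn => hP _ _ (by omega) e (hRe m hm) (hRe n hn)⟩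

end WalkFamily

namespace GrainLine

variable {V : Type*} {G : SimpleGraph V} {x y : V} (gl : GrainLine G x y)

def Sbtw (a w c : V) : Prop :=
  (gl.le a w ∧ a ≠ w ∧ gl.le w c ∧ w ≠ c) ∨ (gl.le c w ∧ c ≠ w ∧ gl.le w a ∧ w ≠ a)

variable {gl} in
lemma Sbtw.symm {a w c : V} (h : gl.Sbtw a w c) : gl.Sbtw c w a := Or.symm h

lemma sbtw_trichotomy {a b c : V} (ha : a ∈ gl.L) (hb : b ∈ gl.L) (hc : c ∈ gl.L)
    (hab : a ≠ b) (hac : a ≠ c) (hbc : b ≠ c) :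
    gl.Sbtw b a c ∨ gl.Sbtw a b c ∨ gl.Sbtw a c b := by
  have htrans := gl.le_trans
  have hanti := gl.le_antisymm
  unfold Sbtw
  rcases gl.le_total a ha b hb with h1 | h1 <;> rcases gl.le_total b hb c hc with h2 | h2 <;>
    rcases gl.le_total a ha c hc with h3 | h3 <;> grind

lemma exists_sbtw_of_notMem_support {H : SimpleGraph V} {s t : V} (W : H.Walk s t)
    (hW : ∀ v ∈ W.support, v ∈ gl.L) {p z q : V} (hz : z ∈ gl.L) (hzW : z ∉ W.support)
    (hp : p ∈ W.support) (hq : q ∈ W.support) (h : gl.Sbtw p z q) :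
    ∃ a c, s(a, c) ∈ W.edges ∧ gl.Sbtw a z c := by
  wlog hpq : gl.le p z ∧ gl.le z q generalizing p q
  · exact this hq hp h.symm (by rcases h with h | h <;> grind)
  obtain ⟨R, -, hRs, hRe⟩ := W.exists_isPath_of_mem_support hp hq
  have hqz : ¬ gl.le q z := fun hqz =>
    hzW (gl.le_antisymm z hz q (hW q hq) hpq.2 hqz ▸ hq)
  obtain ⟨d, hd, hfst, hsnd⟩ := R.exists_boundary_dart {v | gl.le v z} hpq.1 hqz
  have hfW := hRs (R.dart_fst_mem_support_of_mem_darts hd)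
  have hsW := hRs (R.dart_snd_mem_support_of_mem_darts hd)
  exact ⟨d.fst, d.snd, hRe (List.mem_map_of_mem hd), Or.inl ⟨hfst, fun h => hzW (h ▸ hfW),
    (gl.le_total _ (hW _ hsW) z hz).resolve_left hsnd, fun h => hzW (h ▸ hsW)⟩⟩

lemma exists_sbtw_of_sbtw_start {H : SimpleGraph V} {s t w : V} {W : H.Walk s t}
    (hWp : W.IsPath) (hW : ∀ v ∈ W.support, v ∈ gl.L) (hw : w ∈ W.support)
    (h : gl.Sbtw w s t) : ∃ a c, s(a, c) ∈ W.edges ∧ gl.Sbtw a s c := by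
  classical
  have hws : w ≠ s := by rcases h with h | h <;> grind
  obtain ⟨a, c, hac, h'⟩ := gl.exists_sbtw_of_notMem_support (W.dropUntil w hw)
    (fun v hv => hW v (W.support_dropUntil_subset_support hw hv)) (hW s W.start_mem_support)
    (start_notMem_support_dropUntil hWp hw hws) (start_mem_support _) (end_mem_support _) h
  exact ⟨a, c, W.edges_dropUntil_subset_edges hw hac, h'⟩

lemma mem_support_of_mem_Llt_s6 {z : V} {e n : ℕ} (hz : z ∈ gl.Llt e) (hn : e ≤ n) :
    z ∈ (gl.P n).support := by
  obtain ⟨hzL, m, hm, hzm⟩ := hz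
  obtain ⟨N, hN⟩ := (gl.gl1 z).1 hzL
  exact (hN n).2 (((hN m).1 hzm).trans (by omega))

open List in
lemma isSegEnds_of_support_eq {e : ℕ} {L₁ M L₂ : List V} {u v : V}
    (hl : (gl.P e).support = L₁ ++ u :: (M ++ v :: L₂)) (hu : u ∈ gl.Llt e)
    (hv : v ∈ gl.Llt e) (hM : ∀ z ∈ M, z ∉ gl.Llt e) : gl.IsSegEnds e u v := by
  have he : 1 ≤ e := by obtain ⟨-, m, hm, -⟩ := hu; omega
  have hnd := (gl.isPath e).support_nodup
  rw [hl] at hnd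
  have hle {a b : V} (ha : a ∈ gl.Llt e) (hb : b ∈ gl.Llt e) (hab : a ≠ b)
      (h : [a, b] <+ L₁ ++ u :: (M ++ v :: L₂)) : gl.le a b :=
    (gl.gl3 e he a b ha.1 hb.1 ha.2 hb.2 hab).2 (hl ▸ h)
  have huv : u ≠ v := by grind
  refine ⟨hu, hv, huv, hle hu hv huv (by simp), fun z hz huz hzv => ?_⟩
  have hzl : z ∈ L₁ ++ u :: (M ++ v :: L₂) := hl ▸ gl.mem_support_of_mem_Llt_s6 hz le_rfl
  simp only [mem_append, mem_cons] at hzl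
  rcases hzl with hz₁ | rfl | hzM | rfl | hz₂
  · have hzu : z ≠ u := by grind
    exact absurd (gl.le_antisymm z hz.1 u hu.1
      (hle hz hu hzu ((singleton_sublist.2 hz₁).append (singleton_sublist.2 mem_cons_self)))
      huz) hzu
  · exact Or.inl rfl
  · exact absurd hz (hM z hzM)
  · exact Or.inr rfl
  · have hvz : v ≠ z := by grind
    exact absurd (gl.le_antisymm v hv.1 z hz.1 (hle hv hz hvz ((nil_sublist L₁).append
      (((nil_sublist M).append (cons_sublist_cons.2 (singleton_sublist.2 hz₂))).cons u))) hzv)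
      hvz

variable {gl} in
lemma IsSegEnds.not_sbtw {e : ℕ} {u v a c w : V} (hseg : gl.IsSegEnds e u v) (ha : a ∈ gl.L)
    (hc : c ∈ gl.L) (hua : gl.le u a) (hav : gl.le a v) (huc : gl.le u c) (hcv : gl.le c v)
    (hw : w ∈ gl.Llt e) : ¬ gl.Sbtw a w c := by
  obtain ⟨⟨hu, -⟩, ⟨hv, -⟩, -, -, hcons⟩ := hseg
  have htrans := gl.le_trans
  have hanti := gl.le_antisymm
  have := hcons w hw
  have := hw.1
  unfold Sbtw
  grind

open List in
lemma not_sbtw_of_mem_darts (hws : gl.WellStructured) {e : ℕ} {d : G.Dart}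
    (hd : d ∈ (gl.P e).darts) (ha : d.fst ∈ gl.L) (hc : d.snd ∈ gl.L) {w : V}
    (hw : w ∈ gl.Llt e) : ¬ gl.Sbtw d.fst w d.snd := by
  obtain ⟨l₁, l₂, hl⟩ := mem_darts_iff_fst_snd_infix_support.1 hd
  have hl' : (gl.P e).support = (l₁ ++ [d.fst]) ++ (d.snd :: l₂) := by simp [← hl]
  have he : 0 < e := by obtain ⟨-, m, hm, -⟩ := hw; omega
  obtain ⟨hxA, hyB⟩ := mem_of_support_eq_append (by simp) (by simp) hl'
  obtain ⟨A₁, u, A₂, hA, hu, hA₁, haA⟩ := exists_cons_eq_append_cons (p := (· ∈ gl.Llt e))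
    (c := d.fst) (l := l₁.reverse)
    ⟨x, by simpa [or_comm] using hxA, gl.x_mem, 0, he, start_mem_support _⟩
  obtain ⟨B₁, v, B₂, hB, hv, hB₁, hcB⟩ := exists_cons_eq_append_cons (p := (· ∈ gl.Llt e))
    ⟨y, hyB, gl.y_mem, 0, he, end_mem_support _⟩
  have hsupp : (gl.P e).support = A₂.reverse ++ u :: ((A₁.reverse ++ B₁) ++ v :: B₂) := by
    have hA' := congrArg List.reverse hA
    simp only [List.reverse_cons, List.reverse_reverse, List.reverse_append] at hA'
    rw [hl', hA', hB]
    simp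
  have hseg := gl.isSegEnds_of_support_eq hsupp hu hv fun z hz => by
    rcases mem_append.1 hz with hz | hz
    exacts [hA₁ z (mem_reverse.1 hz), hB₁ z hz]
  have hint {z : V} (hzL : z ∈ gl.L) (hz : z = u ∨ z ∈ A₁.reverse ++ B₁ ∨ z = v) :
      gl.le u z ∧ gl.le z v := by
    refine hws e u v hseg z hzL ?_
    rcases hz with rfl | hz | rfl
    · exact Or.inl rfl
    · exact Or.inr (Or.inr (hsupp ▸ (nil_sublist _).append (cons_sublist_cons.2
        ((singleton_sublist.2 hz).append (singleton_sublist.2 mem_cons_self)))))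
    · exact Or.inr (Or.inl rfl)
  obtain ⟨hua, hav⟩ := hint ha (by
    simp only [mem_append, mem_reverse, mem_singleton] at haA ⊢; tauto)
  obtain ⟨huc, hcv⟩ := hint hc (by
    simp only [mem_append, mem_reverse, mem_singleton] at hcB ⊢; tauto)
  exact hseg.not_sbtw ha hc hua hav huc hcv hw

lemma mem_edges_eDepth {e : Sym2 V} (he : e ∈ gl.union.edgeSet) :
    e ∈ (gl.P (gl.eDepth e)).edges :=
  Nat.sInf_mem (mem_edgeSet_walkUnion.1 he)

lemma mem_support_vDepth {v : V} (hv : v ∈ gl.L) : v ∈ (gl.P (gl.vDepth v)).support := by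
  obtain ⟨N, hN⟩ := (gl.gl1 v).1 hv
  exact Nat.sInf_mem (s := {n | v ∈ (gl.P n).support}) ⟨N, (hN N).2 le_rfl⟩

lemma finite_setOf_eDepth_le (D : ℕ) : {e | e ∈ gl.union.edgeSet ∧ gl.eDepth e ≤ D}.Finite := by
  refine ((Set.finite_Iic D).biUnion fun p _ => (gl.P p).edges.finite_toSet).subset ?_
  rintro e ⟨he, hD⟩
  exact Set.mem_biUnion (Set.mem_Iic.2 hD) (gl.mem_edges_eDepth he)

lemma eDepth_le_vDepth (hws : gl.WellStructured) (hL : gl.supp ⊆ gl.L) {a c w : V}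
    (hac : s(a, c) ∈ gl.union.edgeSet) (hw : w ∈ gl.L) (h : gl.Sbtw a w c) :
    gl.eDepth s(a, c) ≤ gl.vDepth w := by
  by_contra! hlt
  obtain ⟨d, hd, hde⟩ := List.mem_map.1 (gl.mem_edges_eDepth hac)
  have hfst : d.fst ∈ gl.L := hL ⟨_, (gl.P _).dart_fst_mem_support_of_mem_darts hd⟩
  have hsnd : d.snd ∈ gl.L := hL ⟨_, (gl.P _).dart_snd_mem_support_of_mem_darts hd⟩
  have hnot := gl.not_sbtw_of_mem_darts hws hd hfst hsnd ⟨hw, _, hlt, gl.mem_support_vDepth hw⟩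
  rcases Sym2.eq_iff.1 hde with ⟨rfl, rfl⟩ | ⟨rfl, rfl⟩
  exacts [hnot h, hnot h.symm]

lemma supp_subset_L_of_free (hfree : gl.Free) : gl.supp ⊆ gl.L := by
  rintro v ⟨n, hn⟩
  by_contra hvL
  refine hfree.infinite_incidenceSet ⟨n, hn⟩ ((gl.P n).edges.finite_toSet.subset ?_)
  rintro e ⟨he, hve⟩
  obtain ⟨m, hm⟩ := mem_edgeSet_walkUnion.1 he
  obtain rfl : m = n := by
    by_contra hmn
    exact gl.gl2 n v hn hvL m hmn ((gl.P m).mem_support_of_mem_edges hm hve)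
  exact hm

lemma infEdgeConnOn_tail {d : ℕ} (hd : ∀ n ≥ d, ∀ v ∈ (gl.P n).support, v ∈ gl.L) :
    InfEdgeConnOn (walkUnion fun n => gl.P (n + d)) (walkSupp fun n => gl.P (n + d)) := by
  refine infEdgeConnOn_walkUnion gl.ne_xy (fun m n hmn => gl.edgeDisj _ _ (by omega)) ?_
  rintro v ⟨n, hn⟩
  obtain ⟨N, hN⟩ := (gl.gl1 v).1 (hd (n + d) (by omega) v hn)
  exact ⟨N, fun m hm => (hN _).2 (by omega)⟩

section InUnion

variable {x' y' : V} (gl' : GrainLine gl.union x' y')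

lemma mem_L_of_mem_support (hL : gl.supp ⊆ gl.L) {n : ℕ} {v : V}
    (hv : v ∈ (gl'.P n).support) : v ∈ gl.L :=
  hL (mem_walkSupp_of_mem_support (gl'.P n) gl'.ne_xy hv)

lemma finite_setOf_exists_eDepth_le (D : ℕ) :
    {n | ∃ e ∈ (gl'.P n).edges, gl.eDepth e ≤ D}.Finite := by
  refine (finite_setOf_exists_mem_edges gl'.edgeDisj (gl.finite_setOf_eDepth_le D)).subset ?_
  rintro n ⟨e, he, hD⟩
  exact ⟨e, ⟨(gl'.P n).edges_subset_edgeSet he, hD⟩, he⟩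

lemma exists_eDepth_le_of_notMem_L (hws : gl.WellStructured) (hL : gl.supp ⊆ gl.L) {n : ℕ}
    {w : V} (hw : w ∈ (gl'.P n).support) (hwM : w ∉ gl'.L) :
    ∃ e ∈ (gl'.P n).edges, gl.eDepth e ≤ max (gl.vDepth x') (gl.vDepth y') := by
  have hQL {m : ℕ} {v : V} (hv : v ∈ (gl'.P m).support) : v ∈ gl.L :=
    gl.mem_L_of_mem_support gl' hL hv
  have hshallow {m : ℕ} {z : V} (hz : z ∈ gl.L) {a c : V} (hac : s(a, c) ∈ (gl'.P m).edges)
      (h : gl.Sbtw a z c) : ∃ e ∈ (gl'.P m).edges, gl.eDepth e ≤ gl.vDepth z :=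
    ⟨_, hac, gl.eDepth_le_vDepth hws hL ((gl'.P m).edges_subset_edgeSet hac) hz h⟩
  have hx' : x' ∈ gl.L := hQL (start_mem_support (gl'.P n))
  have hy' : y' ∈ gl.L := hQL (end_mem_support (gl'.P n))
  have hwx' : w ≠ x' := fun h => hwM (h ▸ gl'.x_mem)
  have hwy' : w ≠ y' := fun h => hwM (h ▸ gl'.y_mem)
  rcases gl.sbtw_trichotomy (hQL hw) hx' hy' hwx' hwy' gl'.ne_xy with h | h | h
  · -- by (GL2) every `Q_m` with `m ≠ n` avoids `w`, yet runs from one side of it to the other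
    refine absurd ((gl.finite_setOf_exists_eDepth_le gl' (gl.vDepth w)).subset fun m hm => ?_)
      (Set.finite_singleton n).infinite_compl
    obtain ⟨a, c, hac, hsb⟩ := gl.exists_sbtw_of_notMem_support (gl'.P m) (fun v => hQL)
      (hQL hw) (gl'.gl2 n w hw hwM m hm) (start_mem_support _) (end_mem_support _) h
    exact hshallow (hQL hw) hac hsb
  · obtain ⟨a, c, hac, hsb⟩ := gl.exists_sbtw_of_sbtw_start (gl'.isPath n) (fun v => hQL) hw h
    obtain ⟨e, he, hD⟩ := hshallow hx' hac hsb
    exact ⟨e, he, hD.trans (le_max_left _ _)⟩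
  · obtain ⟨a, c, hac, hsb⟩ := gl.exists_sbtw_of_sbtw_start (gl'.isPath n).reverse
      (fun v hv => hQL (by simpa using hv)) (by simpa using hw) h
    rw [edges_reverse, List.mem_reverse] at hac
    obtain ⟨e, he, hD⟩ := hshallow hy' hac hsb
    exact ⟨e, he, hD.trans (le_max_right _ _)⟩

end InUnion

end GrainLine

/-- a grain line in the graph defined by a free and
well-structured grain line has only finitely many vertices outside its limit
set; in particular some tail of it is free. -/
theorem grainline_in_free_is_almost_free {V : Type*} {G : SimpleGraph V}
    {x y x' y' : V} (gl : GrainLine G x y) (hfree : gl.Free)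
    (hws : gl.WellStructured) (gl' : GrainLine gl.union x' y') :
    {v | v ∈ gl'.supp ∧ v ∉ gl'.L}.Finite ∧
    ∃ d : ℕ, InfEdgeConnOn (walkUnion (fun n => gl'.P (n + d)))
      (walkSupp (fun n => gl'.P (n + d))) := by
  have hL := gl.supp_subset_L_of_free hfree
  set S := {n | ∃ e ∈ (gl'.P n).edges, gl.eDepth e ≤ max (gl.vDepth x') (gl.vDepth y')}
  have hS : S.Finite := gl.finite_setOf_exists_eDepth_le gl' _
  have hpriv {n : ℕ} {w : V} (hw : w ∈ (gl'.P n).support) (hwM : w ∉ gl'.L) : n ∈ S :=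
    gl.exists_eDepth_le_of_notMem_L gl' hws hL hw hwM
  refine ⟨(hS.biUnion fun n _ => (gl'.P n).support.finite_toSet).subset ?_, ?_⟩
  · rintro v ⟨⟨n, hn⟩, hvM⟩
    exact Set.mem_biUnion (hpriv hn hvM) hn
  · obtain ⟨d, hd⟩ := hS.bddAbove
    refine ⟨d + 1, gl'.infEdgeConnOn_tail fun n hn v hv => ?_⟩
    by_contra hvM
    have := hd (hpriv hv hvM)
    omega
end

section
/- Let G be an infinitely edge-connected graph and {A,B} a compound-separation of G that minimally separates two vertices of G. Then the induced subgraphs G[A] and G[B] are infinitely edge-connected. -/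
open SimpleGraph

/-!
Infinite edge-connectivity means that no finite set of edges separates two vertices (given this,
infinitely many edge-disjoint paths are found greedily); in particular a vertex set with finite
edge boundary is empty or everything. Fix `a ∈ A \ B` and `b ∈ B \ A` minimally separated by
`{A, B}`, a finite set `F` of edges of `G[A]`, and the vertex set `K` of the component of `a` in
`G[A] - F`. If `K` missed a vertex of `A ∩ B`, then `{K, B ∪ (A \ K)}` would be a
compound-separation separating `a` from `b` with the smaller separator `K ∩ B`. So `A ∩ B ⊆ K`,
and then every edge leaving `A \ K` lies in `F` or crosses `{A, B}`: as `G` is infinitely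
edge-connected, `A \ K` is empty.
-/

namespace SimpleGraph

variable {V : Type*} (G : SimpleGraph V)

def edgeBoundary (S : Set V) : Set (V × V) :=
  {p | G.Adj p.1 p.2 ∧ p.1 ∈ S ∧ p.2 ∉ S}

def IsClosedOffEdges (A : Set V) (F : Set (Sym2 V)) (K : Set V) : Prop :=
  ∀ ⦃p q : V⦄, p ∈ K → q ∈ A → G.Adj p q → s(p, q) ∉ F → q ∈ K

end SimpleGraph

open SimpleGraph

section

variable {V : Type*} {G : SimpleGraph V}

theorem Set.Finite.preimage_sym2Mk {F : Set (Sym2 V)} (hF : F.Finite) :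
    {p : V × V | s(p.1, p.2) ∈ F}.Finite := by
  refine hF.preimage' (f := Sym2.mk.uncurry) fun e _ => ?_
  induction e using Sym2.ind with
  | h a b =>
    refine ((Set.finite_singleton (b, a)).insert (a, b)).subset fun p hp => ?_
    rcases p with ⟨x, y⟩
    simp only [Set.mem_preimage, Function.uncurry_apply_pair, Set.mem_singleton_iff,
      Sym2.eq_iff] at hp
    rcases hp with ⟨rfl, rfl⟩ | ⟨rfl, rfl⟩ <;> simp

theorem InfEdgeConn.finEdgeConn (hG : InfEdgeConn G) (u v : V) : FinEdgeConn G u v := by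
  intro F hF
  rcases eq_or_ne u v with rfl | huv
  · rfl
  obtain ⟨P, -, hdisj⟩ := hG.2 u v huv
  by_contra hreach
  have hmeet : ∀ n, ∃ e ∈ F, e ∈ (P n).edges := by
    intro n
    by_contra! h
    exact hreach ⟨(P n).toDeleteEdges F fun e he hFe => h e hFe he⟩
  choose f hfF hfe using hmeet
  refine Set.infinite_of_injective_forall_mem (fun m n hmn => ?_) hfF hF
  by_contra hne
  exact hdisj m n hne _ (hfe m) (hmn ▸ hfe n)

theorem FinEdgeConn.exists_edgeDisjoint_paths {u v : V} (h : FinEdgeConn G u v) :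
    ∃ P : ℕ → G.Walk u v, (∀ n, (P n).IsPath) ∧ ∀ m n, m ≠ n → EdgeDisjW (P m) (P n) := by
  classical
  have havoid : ∀ s : Finset (Sym2 V), ∃ p : G.Walk u v, p.IsPath ∧ ∀ e ∈ p.edges, e ∉ s := by
    intro s
    obtain ⟨p⟩ := h s s.finite_toSet
    refine ⟨p.toPath.1.mapLe (G.deleteEdges_le _), p.toPath.2.mapLe _, fun e he => ?_⟩
    rw [Walk.edges_mapLe_eq_edges] at he
    have := p.toPath.1.edges_subset_edgeSet he
    rw [edgeSet_deleteEdges] at this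
    exact this.2
  choose pick hpath hpick using havoid
  -- `S n` collects the edges of the first `n` paths, which the next path avoids
  let S : ℕ → Finset (Sym2 V) := fun n => Nat.rec ∅ (fun _ s => s ∪ (pick s).edges.toFinset) n
  have hS : Monotone S := monotone_nat_of_le_succ fun _ => Finset.subset_union_left
  have hlt : ∀ m n, m < n → EdgeDisjW (pick (S m)) (pick (S n)) := fun m n hmn e hm hn =>
    hpick (S n) e hn <| hS hmn <| Finset.mem_union_right _ (List.mem_toFinset.2 hm)
  refine ⟨fun n => pick (S n), fun n => hpath _, fun m n hmn => ?_⟩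
  rcases hmn.lt_or_gt with h | h
  · exact hlt m n h
  · exact fun e hm hn => hlt n m h e hn hm

theorem infEdgeConn_iff : InfEdgeConn G ↔ (∃ u v : V, u ≠ v) ∧ ∀ u v, FinEdgeConn G u v :=
  ⟨fun hG => ⟨hG.1, hG.finEdgeConn⟩,
    fun h => ⟨h.1, fun u v _ => (h.2 u v).exists_edgeDisjoint_paths⟩⟩

theorem InfEdgeConn.edgeBoundary_infinite (hG : InfEdgeConn G) {S : Set V} {x y : V}
    (hx : x ∈ S) (hy : y ∉ S) : (G.edgeBoundary S).Infinite := by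
  intro hfin
  obtain ⟨p⟩ := hG.finEdgeConn x y _ (hfin.image Sym2.mk.uncurry)
  obtain ⟨d, -, hd₁, hd₂⟩ := p.exists_boundary_dart S hx hy
  have hadj := d.adj
  rw [deleteEdges_adj] at hadj
  exact hadj.2 ⟨d.toProd, ⟨hadj.1, hd₁, hd₂⟩, rfl⟩

end

section

variable {V : Type*} {G : SimpleGraph V} {A B K : Set V} {F : Set (Sym2 V)} {a b u v : V}

theorem SepPair.symm (h : SepPair A B u v) : SepPair B A u v := Or.symm h

theorem SepPair.swap (h : SepPair A B u v) : SepPair A B v u := by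
  rcases h with h | h
  exacts [Or.inr h.symm, Or.inl h.symm]

theorem MinSeps.symm (h : MinSeps G A B u v) : MinSeps G B A u v :=
  ⟨h.1.symm, fun C D hCD hlt => h.2 C D hCD (Set.inter_comm A B ▸ hlt)⟩

theorem MinSeps.swap (h : MinSeps G A B u v) : MinSeps G A B v u :=
  ⟨h.1.swap, fun C D hCD hlt hsep => h.2 C D hCD hlt hsep.swap⟩

theorem IsCompoundSep.symm (h : IsCompoundSep G A B) : IsCompoundSep G B A := by
  obtain ⟨hcover, hA, hB, hfin, hcross⟩ := h
  refine ⟨Set.union_comm A B ▸ hcover, hB, hA, Set.inter_comm A B ▸ hfin, ?_⟩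
  refine (hcross.preimage Prod.swap_injective.injOn).subset ?_
  rintro ⟨p, q⟩ ⟨hadj, hp, hq⟩
  exact ⟨hadj.symm, hq, hp⟩

theorem IsCompoundSep.finite_edgeBoundary (h : IsCompoundSep G A B) :
    {p ∈ G.edgeBoundary A | p.1 ∉ B}.Finite := by
  refine h.2.2.2.2.subset ?_
  rintro ⟨p, q⟩ ⟨⟨hadj, hp, hq⟩, hpB⟩
  have hqB : q ∈ A ∪ B := h.1 ▸ Set.mem_univ q
  exact ⟨hadj, ⟨hp, hpB⟩, hqB.resolve_left hq, hq⟩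

theorem SimpleGraph.IsClosedOffEdges.edgeBoundary_subset (hK : G.IsClosedOffEdges A F K)
    (hKA : K ⊆ A) :
    {p ∈ G.edgeBoundary K | p.1 ∉ B} ⊆
      {p ∈ G.edgeBoundary A | p.1 ∉ B} ∪ {p | s(p.1, p.2) ∈ F} := by
  rintro ⟨p, q⟩ ⟨⟨hadj, hp, hq⟩, hpB⟩
  by_cases hqA : q ∈ A
  · exact Or.inr (by_contra fun hpq => hq (hK hp hqA hadj hpq))
  · exact Or.inl ⟨⟨hadj, hKA hp, hqA⟩, hpB⟩

theorem SimpleGraph.IsClosedOffEdges.edgeBoundary_sdiff_subset (hK : G.IsClosedOffEdges A F K)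
    (hABK : A ∩ B ⊆ K) :
    G.edgeBoundary (A \ K) ⊆ {p ∈ G.edgeBoundary A | p.1 ∉ B} ∪ {p | s(p.1, p.2) ∈ F} := by
  rintro ⟨p, q⟩ ⟨hadj, ⟨hpA, hpK⟩, hq⟩
  have hpB : p ∉ B := fun hpB => hpK (hABK ⟨hpA, hpB⟩)
  by_cases hqA : q ∈ A
  · have hqK : q ∈ K := by_contra fun hqK => hq ⟨hqA, hqK⟩
    refine Or.inr (by_contra fun hpq => hpK (hK hqK hpA hadj.symm ?_))
    rwa [Sym2.eq_swap]
  · exact Or.inl ⟨⟨hadj, hpA, hqA⟩, hpB⟩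

theorem IsCompoundSep.isCompoundSep_of_isClosedOffEdges (hAB : IsCompoundSep G A B)
    (hF : F.Finite) (hK : G.IsClosedOffEdges A F K) (hKA : K ⊆ A) (ha : a ∈ K \ B) :
    IsCompoundSep G K (B ∪ (A \ K)) := by
  obtain ⟨b, hbB, hbA⟩ := hAB.2.2.1
  refine ⟨Set.eq_univ_of_forall fun x => ?_, ⟨a, ha.1, ?_⟩, ⟨b, Or.inl hbB, hbA ∘ (hKA ·)⟩,
    hAB.2.2.2.1.subset ?_, (hAB.finite_edgeBoundary.union hF.preimage_sym2Mk).subset ?_⟩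
  · have hx : x ∈ A ∪ B := hAB.1 ▸ Set.mem_univ x
    by_cases hxK : x ∈ K
    · exact Or.inl hxK
    · exact Or.inr (hx.elim (fun hxA => Or.inr ⟨hxA, hxK⟩) Or.inl)
  · rintro (haB | haAK)
    exacts [ha.2 haB, haAK.2 ha.1]
  · exact fun z ⟨hzK, hz⟩ => ⟨hKA hzK, hz.resolve_right fun h => h.2 hzK⟩
  · rintro ⟨p, q⟩ ⟨hadj, ⟨hpK, hpD⟩, -, hqK⟩
    exact hK.edgeBoundary_subset hKA ⟨⟨hadj, hpK, hqK⟩, fun hpB => hpD (Or.inl hpB)⟩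

theorem MinSeps.subset_of_isClosedOffEdges (hmin : MinSeps G A B a b) (hG : InfEdgeConn G)
    (hAB : IsCompoundSep G A B) (ha : a ∈ A \ B) (hF : F.Finite)
    (hK : G.IsClosedOffEdges A F K) (hKA : K ⊆ A) (haK : a ∈ K) : A ⊆ K := by
  have hb : b ∈ B \ A := (hmin.1.resolve_right fun h => h.1.2 ha.1).2
  have hABK : A ∩ B ⊆ K := by
    by_contra hABK
    refine hmin.2 _ _ (hAB.isCompoundSep_of_isClosedOffEdges hF hK hKA ⟨haK, ha.2⟩) ⟨?_, ?_⟩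
      (Or.inl ⟨⟨haK, ?_⟩, Or.inl hb.1, hb.2 ∘ (hKA ·)⟩)
    · exact fun z ⟨hzK, hz⟩ => ⟨hKA hzK, hz.resolve_right fun h => h.2 hzK⟩
    · exact fun hsub => hABK fun z hz => (hsub hz).1
    · rintro (haB | haAK)
      exacts [ha.2 haB, haAK.2 haK]
  intro x hxA
  by_contra hxK
  exact hG.edgeBoundary_infinite (S := A \ K) ⟨hxA, hxK⟩ (fun h => h.2 haK)
    ((hAB.finite_edgeBoundary.union hF.preimage_sym2Mk).subset
      (hK.edgeBoundary_sdiff_subset hABK))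

theorem MinSeps.infEdgeConn_induce (hmin : MinSeps G A B a b) (hG : InfEdgeConn G)
    (hAB : IsCompoundSep G A B) (ha : a ∈ A \ B) : InfEdgeConn (G.induce A) := by
  rw [infEdgeConn_iff]
  have hA : ∃ x ∈ A, x ≠ a := by
    by_contra! hA
    obtain ⟨b, -, hbA⟩ := hAB.2.2.1
    refine hG.edgeBoundary_infinite ha.1 hbA (hAB.finite_edgeBoundary.subset fun p hp => ⟨hp, ?_⟩)
    rw [hA _ hp.2.1]
    exact ha.2
  obtain ⟨x, hxA, hxa⟩ := hA
  refine ⟨⟨⟨x, hxA⟩, ⟨a, ha.1⟩, fun h => hxa (congrArg Subtype.val h)⟩, fun y z F hF => ?_⟩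
  let H := (G.induce A).deleteEdges F
  suffices hreach : ∀ y, H.Reachable ⟨a, ha.1⟩ y from (hreach y).symm.trans (hreach z)
  have hclosed : G.IsClosedOffEdges A (Sym2.map Subtype.val '' F)
      {w | ∃ hw : w ∈ A, H.Reachable ⟨a, ha.1⟩ ⟨w, hw⟩} := by
    rintro p q ⟨hpA, hp⟩ hqA hadj hpq
    refine ⟨hqA, hp.trans (Adj.reachable ?_)⟩
    rw [deleteEdges_adj]
    exact ⟨hadj, fun h => hpq ⟨_, h, rfl⟩⟩
  rintro ⟨y, hyA⟩
  exact (hmin.subset_of_isClosedOffEdges hG hAB ha (hF.image _) hclosed (fun w hw => hw.1)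
    ⟨ha.1, .rfl⟩ hyA).2

end

/-- splitting lemma: if a compound-separation `{A,B}` of an
infinitely edge-connected graph minimally separates two vertices, then both
`G[A]` and `G[B]` are infinitely edge-connected. -/
theorem splitting_lemma {V : Type*} (G : SimpleGraph V) (hG : InfEdgeConn G)
    (A B : Set V) (hAB : IsCompoundSep G A B)
    (u v : V) (hmin : MinSeps G A B u v) :
    InfEdgeConn (G.induce A) ∧ InfEdgeConn (G.induce B) := by
  wlog huv : u ∈ A \ B ∧ v ∈ B \ A generalizing u v
  · exact this v u hmin.swap (hmin.1.resolve_left huv).symm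
  exact ⟨hmin.infEdgeConn_induce hG hAB huv.1,
    hmin.symm.swap.infEdgeConn_induce hG hAB.symm huv.2⟩
end
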